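/- Let A, B, C be three pairwise disjoint finite point sets in R^d with |A| ≤ |B|. Then D(A∪B, C) ≤ 3·Δ(B∪C) + 3·D(A,B) − Δ(B) − Δ(C). -/

import Mathlib

open Finset
open scoped Classical

noncomputable def centroid {d : ℕ} (P : Finset (EuclideanSpace ℝ (Fin d))) :
    EuclideanSpace ℝ (Fin d) :=
  (P.card : ℝ)⁻¹ • ∑ p ∈ P, p

noncomputable def Delta {d : ℕ} (P : Finset (EuclideanSpace ℝ (Fin d))) : ℝ :=
  ∑ p ∈ P, ‖p - centroid P‖ ^ 2

noncomputable def mergeD {d : ℕ} (A B : Finset (EuclideanSpace ℝ (Fin d))) : ℝ :=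
  Delta (A ∪ B) - Delta A - Delta B

/-! Ward's formula `D(X, Y) = |X||Y| / (|X| + |Y|) · ‖μ X - μ Y‖²` turns the claim into an
inequality between centroids. Since `μ(A ∪ B) - μ C = (μ B - μ C) + |A|/(|A|+|B|) (μ A - μ B)`,
the weighted inequality `‖u + w‖² ≤ 3/2 ‖u‖² + 3 ‖w‖²` and `|A| ≤ |B|` give
`D(A ∪ B, C) ≤ 3 D(B, C) + 3 D(A, B)`; finally `D(B, C) = Δ(B ∪ C) - Δ B - Δ C` and `Δ ≥ 0`. -/

theorem sq_norm_add_le_of_pos {E : Type*} [SeminormedAddCommGroup E] {t : ℝ} (ht : 0 < t)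
    (u w : E) : ‖u + w‖ ^ 2 ≤ (1 + t) * ‖u‖ ^ 2 + (1 + t⁻¹) * ‖w‖ ^ 2 := by
  have hamgm : 2 * ‖u‖ * ‖w‖ ≤ t * ‖u‖ ^ 2 + t⁻¹ * ‖w‖ ^ 2 := by
    have hsq : t * (t * ‖u‖ ^ 2 + t⁻¹ * ‖w‖ ^ 2 - 2 * ‖u‖ * ‖w‖) = (t * ‖u‖ - ‖w‖) ^ 2 := by
      field_simp; ring
    nlinarith [sq_nonneg (t * ‖u‖ - ‖w‖)]
  nlinarith [norm_add_le u w, norm_nonneg (u + w)]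

theorem weighted_sq_norm_merge_le {E : Type*} [SeminormedAddCommGroup E] [NormedSpace ℝ E]
    {a b c : ℝ} (ha : 0 ≤ a) (hab : a ≤ b) (hc : 0 ≤ c) (x y z : E) :
    (a + b) * c / (a + b + c) * ‖(a + b)⁻¹ • (a • x + b • y) - z‖ ^ 2 ≤
      3 * (b * c / (b + c) * ‖y - z‖ ^ 2) + 3 * (a * b / (a + b) * ‖x - y‖ ^ 2) := by
  rcases (ha.trans hab).eq_or_lt with rfl | hb
  · obtain rfl : a = 0 := le_antisymm hab ha
    simp
  have hsplit : (a + b)⁻¹ • (a • x + b • y) - z = (y - z) + (a / (a + b)) • (x - y) := by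
    match_scalars <;> field_simp
    ring
  -- Both weight comparisons below reduce to this consequence of `a ≤ b`.
  have hkey : a * c ≤ b * (a + b + c) := by nlinarith
  have hcoef_u : (a + b) * c / (a + b + c) * (1 + 1 / 2) ≤ 3 * (b * c / (b + c)) := by
    rw [div_mul_eq_mul_div, mul_div_assoc', div_le_div_iff₀ (by positivity) (by positivity)]
    nlinarith [mul_le_mul_of_nonneg_left hkey hc]
  have hcoef_w : (a + b) * c / (a + b + c) * ((1 + (1 / 2)⁻¹) * (a / (a + b)) ^ 2) ≤
      3 * (a * b / (a + b)) := by
    have : (a + b) * c / (a + b + c) * ((1 + (1 / 2)⁻¹) * (a / (a + b)) ^ 2) =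
        3 * (a * (a * c / (a + b + c)) / (a + b)) := by
      field_simp; ring
    rw [this]
    gcongr
    rwa [div_le_iff₀ (by positivity)]
  rw [hsplit]
  calc _ ≤ (a + b) * c / (a + b + c) *
        ((1 + 1 / 2) * ‖y - z‖ ^ 2 + (1 + (1 / 2)⁻¹) * ‖(a / (a + b)) • (x - y)‖ ^ 2) := by
        gcongr; exact sq_norm_add_le_of_pos (by norm_num) _ _
    _ = (a + b) * c / (a + b + c) * (1 + 1 / 2) * ‖y - z‖ ^ 2 +
        (a + b) * c / (a + b + c) * ((1 + (1 / 2)⁻¹) * (a / (a + b)) ^ 2) * ‖x - y‖ ^ 2 := by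
        rw [norm_smul, Real.norm_of_nonneg (by positivity)]; ring
    _ ≤ 3 * (b * c / (b + c)) * ‖y - z‖ ^ 2 + 3 * (a * b / (a + b)) * ‖x - y‖ ^ 2 := by
        gcongr
    _ = _ := by ring

theorem sum_mul_sq_norm_sub_weighted_avg {E : Type*} [SeminormedAddCommGroup E]
    [NormedSpace ℝ E] {a b : ℝ} (ha : 0 ≤ a) (hb : 0 ≤ b) (x y : E) :
    a * ‖x - (a + b)⁻¹ • (a • x + b • y)‖ ^ 2 + b * ‖y - (a + b)⁻¹ • (a • x + b • y)‖ ^ 2 =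
      a * b / (a + b) * ‖x - y‖ ^ 2 := by
  rcases (add_nonneg ha hb).eq_or_lt with hab | hab
  · obtain ⟨rfl, rfl⟩ : a = 0 ∧ b = 0 := ⟨by linarith, by linarith⟩
    simp
  have hx : x - (a + b)⁻¹ • (a • x + b • y) = (b / (a + b)) • (x - y) := by
    match_scalars <;> field_simp
    ring
  have hy : y - (a + b)⁻¹ • (a • x + b • y) = (a / (a + b)) • (y - x) := by
    match_scalars <;> field_simp
    ring
  rw [hx, hy, norm_smul, norm_smul, norm_sub_rev y, Real.norm_of_nonneg (by positivity),
    Real.norm_of_nonneg (by positivity)]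
  field_simp
  ring

section Clusters

variable {d : ℕ}

-- Under `open Finset`, a bare `centroid` is ambiguous with `Finset.centroid`.
local notation "μ" => @_root_.centroid d

theorem card_smul_centroid (P : Finset (EuclideanSpace ℝ (Fin d))) :
    (#P : ℝ) • μ P = ∑ p ∈ P, p := by
  rcases P.eq_empty_or_nonempty with rfl | hP
  · simp [_root_.centroid]
  · rw [_root_.centroid, smul_inv_smul₀ (by exact_mod_cast hP.card_pos.ne')]

theorem sum_sub_centroid (P : Finset (EuclideanSpace ℝ (Fin d))) :
    ∑ p ∈ P, (p - μ P) = 0 := by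
  rw [sum_sub_distrib, sum_const, ← Nat.cast_smul_eq_nsmul ℝ, card_smul_centroid, sub_self]

theorem sum_norm_sub_sq (P : Finset (EuclideanSpace ℝ (Fin d))) (z : EuclideanSpace ℝ (Fin d)) :
    ∑ p ∈ P, ‖p - z‖ ^ 2 = Delta P + #P * ‖μ P - z‖ ^ 2 := by
  have hexpand (p : EuclideanSpace ℝ (Fin d)) : ‖p - z‖ ^ 2 =
      ‖p - μ P‖ ^ 2 + 2 * inner ℝ (p - μ P) (μ P - z) + ‖μ P - z‖ ^ 2 := by
    rw [← norm_add_sq_real, sub_add_sub_cancel]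
  rw [sum_congr rfl fun p _ ↦ hexpand p, sum_add_distrib, sum_add_distrib, ← mul_sum,
    ← sum_inner, sum_sub_centroid, sum_const, nsmul_eq_mul, Delta]
  simp

theorem Delta_nonneg (P : Finset (EuclideanSpace ℝ (Fin d))) : 0 ≤ Delta P :=
  sum_nonneg fun _ _ ↦ by positivity

theorem centroid_union {X Y : Finset (EuclideanSpace ℝ (Fin d))} (h : Disjoint X Y) :
    μ (X ∪ Y) = ((#X + #Y : ℝ))⁻¹ • ((#X : ℝ) • μ X + (#Y : ℝ) • μ Y) := by
  rw [_root_.centroid, sum_union h, card_union_of_disjoint h, card_smul_centroid,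
    card_smul_centroid, Nat.cast_add]

theorem mergeD_eq_sum_card_mul {X Y : Finset (EuclideanSpace ℝ (Fin d))} (h : Disjoint X Y) :
    mergeD X Y = #X * ‖μ X - μ (X ∪ Y)‖ ^ 2 + #Y * ‖μ Y - μ (X ∪ Y)‖ ^ 2 := by
  rw [mergeD, Delta, sum_union h, sum_norm_sub_sq, sum_norm_sub_sq]
  ring

theorem mergeD_eq {X Y : Finset (EuclideanSpace ℝ (Fin d))} (h : Disjoint X Y) :
    mergeD X Y = #X * #Y / (#X + #Y) * ‖μ X - μ Y‖ ^ 2 := by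
  rw [mergeD_eq_sum_card_mul h, centroid_union h]
  exact sum_mul_sq_norm_sub_weighted_avg (by positivity) (by positivity) _ _

theorem mergeD_union_le_three_mul {A B C : Finset (EuclideanSpace ℝ (Fin d))}
    (hAB : Disjoint A B) (hAC : Disjoint A C) (hBC : Disjoint B C) (hcard : #A ≤ #B) :
    mergeD (A ∪ B) C ≤ 3 * mergeD B C + 3 * mergeD A B := by
  rw [mergeD_eq (disjoint_union_left.mpr ⟨hAC, hBC⟩), mergeD_eq hBC, mergeD_eq hAB,
    centroid_union hAB, card_union_of_disjoint hAB]
  push_cast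
  exact weighted_sq_norm_merge_le (by positivity) (by exact_mod_cast hcard) (by positivity) _ _ _

end Clusters

theorem mergeD_union_three_bound {d : ℕ} (A B C : Finset (EuclideanSpace ℝ (Fin d)))
    (hAB : Disjoint A B) (hAC : Disjoint A C) (hBC : Disjoint B C)
    (hcard : A.card ≤ B.card) :
    mergeD (A ∪ B) C ≤ 3 * Delta (B ∪ C) + 3 * mergeD A B - Delta B - Delta C := by
  have hmergeD_BC : mergeD B C = Delta (B ∪ C) - Delta B - Delta C := rfl
  linarith [mergeD_union_le_three_mul hAB hAC hBC hcard, Delta_nonneg B, Delta_nonneg C]
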